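/- The functions u(x) = 3/5 − (2/5)·tanh(x), v(x) = (1 + tanh(x))², w(x) = 1 − tanh²(x) satisfy, for all real x, the three equations: u'' + 3u' + u·(41 − 41u − (41/5)v − (31/5)w) = 0, v'' + 3v' + v·(41 − 69u − (34/5)v − (4/5)w) = 0, and w'' + 3w' + w·(41 − 51u − (36/5)v − (6/5)w) = 0. -/

import Mathlib

/-! All three profiles are polynomials in `T = tanh x`, and `T' = 1 - T²`. Hence every
derivative of such a profile is again a polynomial in `T`, and each traveling wave
equation becomes a polynomial identity in `T`. -/

open Real Polynomial

lemma Real.hasDerivAt_tanh (x : ℝ) : HasDerivAt tanh (1 - tanh x ^ 2) x := by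
  have h := (hasDerivAt_sinh x).div (hasDerivAt_cosh x) (cosh_pos x).ne'
  rw [show sinh / cosh = tanh from funext fun y => (tanh_eq_sinh_div_cosh y).symm] at h
  refine h.congr_deriv ?_
  rw [tanh_eq_sinh_div_cosh]
  field_simp

noncomputable def tanhDeriv (p : ℝ[X]) : ℝ[X] := derivative p * (1 - X ^ 2)

lemma hasDerivAt_eval_tanh (p : ℝ[X]) (x : ℝ) :
    HasDerivAt (fun y => p.eval (tanh y)) ((tanhDeriv p).eval (tanh x)) x := by
  rw [tanhDeriv, eval_mul, eval_sub, eval_one, eval_pow, eval_X]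
  exact (p.hasDerivAt (tanh x)).comp x (hasDerivAt_tanh x)

lemma deriv_eval_tanh (p : ℝ[X]) :
    deriv (fun y => p.eval (tanh y)) = fun x => (tanhDeriv p).eval (tanh x) :=
  funext fun x => (hasDerivAt_eval_tanh p x).deriv

theorem stmt7
    (u v w : ℝ → ℝ)
    (hu : ∀ x, u x = 3 / 5 - (2 / 5) * Real.tanh x)
    (hv : ∀ x, v x = (1 + Real.tanh x) ^ 2)
    (hw : ∀ x, w x = 1 - Real.tanh x ^ 2) :
    (∀ x : ℝ, deriv (deriv u) x + 3 * deriv u x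
      + u x * (41 - 41 * u x - (41 / 5) * v x - (31 / 5) * w x) = 0) ∧
    (∀ x : ℝ, deriv (deriv v) x + 3 * deriv v x
      + v x * (41 - 69 * u x - (34 / 5) * v x - (4 / 5) * w x) = 0) ∧
    (∀ x : ℝ, deriv (deriv w) x + 3 * deriv w x
      + w x * (41 - 51 * u x - (36 / 5) * v x - (6 / 5) * w x) = 0) := by
  obtain rfl : u = fun x => (C (3 / 5) - C (2 / 5) * X : ℝ[X]).eval (tanh x) :=
    funext fun x => by simp [hu]
  obtain rfl : v = fun x => ((1 + X) ^ 2 : ℝ[X]).eval (tanh x) :=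
    funext fun x => by simp [hv]
  obtain rfl : w = fun x => (1 - X ^ 2 : ℝ[X]).eval (tanh x) :=
    funext fun x => by simp [hw]
  simp only [deriv_eval_tanh]
  refine ⟨fun x => ?_, fun x => ?_, fun x => ?_⟩ <;>
  simp only [tanhDeriv, derivative_mul, derivative_sub, derivative_add,
    derivative_pow, derivative_C, derivative_X, derivative_one, derivative_zero, eval_mul,
    eval_add, eval_sub, eval_pow, eval_C, eval_X, eval_one, eval_zero, Nat.cast_ofNat,
    Nat.add_one_sub_one] <;>
  ring
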